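/- Let T̄ ⊂ ℝ³ be the tetrahedron with vertices (0,0,0),(1,0,0),(1,1,0),(0,0,1). Its faces have outward unit normals n1=(−1,0,0) (face opposite (1,0,0)... appropriately labeled), n2=(1,−1,0)/√2, n3=(0,0,−1), n4=(0,1,1)/√2. Given f ∈ L²(e₁) with e₁ the face in the plane x1=0, define ū(x)=(f(x2,x3),0,0). If q ∈ P_k(e₁) satisfies ∫_{e₁} f z = ∫_{e₁} q z for all z∈P_k(e₁), then (q(x2,x3),0,0) satisfies all BDM_k interpolation conditions for ū on T̄; in particular the moments of the normal trace on the face with normal (1,−1,0)/√2 also coincide. -/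

import Mathlib

open MeasureTheory intervalIntegral MvPolynomial

/-- Dot product on `ℝ × ℝ × ℝ` (viewed as `ℝ³`). -/
def dot3 (a b : ℝ × ℝ × ℝ) : ℝ := a.1 * b.1 + a.2.1 * b.2.1 + a.2.2 * b.2.2

/-- Flux moment `∫_e (F·n) z dS` over the triangular face with vertices `a,b,c`, where
`N = ±(b-a)×(c-a)` is the area-weighted outward normal. -/
noncomputable def faceFluxMoment (F : ℝ × ℝ × ℝ → ℝ × ℝ × ℝ) (a b c N : ℝ × ℝ × ℝ)
    (z : ℝ × ℝ × ℝ → ℝ) : ℝ :=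
  ∫ s in (0:ℝ)..1, ∫ t in (0:ℝ)..(1 - s),
    dot3 (F (a + s • (b - a) + t • (c - a))) N * z (a + s • (b - a) + t • (c - a))

/-- The reference tetrahedron `T̄ = conv{(0,0,0),(0,1,0),(1,1,0),(0,0,1)}` (the element
without regular vertex property), whose faces have outward unit normals `(-1,0,0)`,
`(1,-1,0)/√2`, `(0,0,-1)`, `(0,1,1)/√2`. -/
def barTet : Set (ℝ × ℝ × ℝ) :=
  {p | 0 ≤ p.1 ∧ p.1 ≤ p.2.1 ∧ 0 ≤ p.2.2 ∧ p.2.1 + p.2.2 ≤ 1}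

/-- The face `e₁` of `T̄` (in the plane `x₁ = 0`) in its coordinates `(x₂,x₃)`. -/
def barFace : Set (ℝ × ℝ) := {pr | 0 ≤ pr.1 ∧ 0 ≤ pr.2 ∧ pr.1 + pr.2 ≤ 1}

/-- Evaluation of a polynomial in three variables at a point of `ℝ × ℝ × ℝ`. -/
noncomputable def ev3 (z : MvPolynomial (Fin 3) ℝ) (p : ℝ × ℝ × ℝ) : ℝ :=
  MvPolynomial.eval ![p.1, p.2.1, p.2.2] z

/-!
Both fields point in the `x₁`-direction and depend only on `(x₂, x₃)`, so every degree of freedom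
reduces to a moment over `e₁` of `f`, resp. `q`, against a polynomial of degree `≤ k` in
`(x₂, x₃)`, where the hypothesis on `q` applies. On a face with normal `N` the flux is `N₁` times
the first component: `N₁ = 0` on the faces `x₃ = 0` and `x₂ + x₃ = 1`, while the faces `x₁ = 0`
and `x₁ = x₂` lie in the planes `x₁ = β x₂` (`β = 0, 1`) over `e₁`, and restricting a test
polynomial to such a plane does not raise its degree. In the interior only the first component `P`
of the test field matters, and integrating out `x₁ ∈ [0, x₂]` gives `∫_T̄ f P = ∫_{e₁} f Q` with
`Q(x₂, x₃) = ∫₀^{x₂} P(x₁, x₂, x₃) dx₁`, of degree `≤ k` because `P ∈ P_{k-1}`.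
-/

section FiberIntegral

variable {α : Type*} [MeasurableSpace α] {μ : Measure α} [SFinite μ]
  {s : Set α} {lo hi : α → ℝ}

theorem setIntegral_prod_Icc_snd (hs : MeasurableSet s) (hlo : Measurable lo)
    (hhi : Measurable hi) (hle : ∀ x ∈ s, lo x ≤ hi x) {g : α × ℝ → ℝ}
    (hg : IntegrableOn g {p | p.1 ∈ s ∧ p.2 ∈ Set.Icc (lo p.1) (hi p.1)} (μ.prod volume)) :
    ∫ p in {p | p.1 ∈ s ∧ p.2 ∈ Set.Icc (lo p.1) (hi p.1)}, g p ∂(μ.prod volume) =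
      ∫ x in s, (∫ y in lo x..hi x, g (x, y)) ∂μ := by
  have hE : MeasurableSet {p : α × ℝ | p.1 ∈ s ∧ p.2 ∈ Set.Icc (lo p.1) (hi p.1)} :=
    (hs.preimage measurable_fst).inter
      ((measurableSet_le (hlo.comp measurable_fst) measurable_snd).inter
        (measurableSet_le measurable_snd (hhi.comp measurable_fst)))
  have fiber (x : α) :
      (fun y => {p : α × ℝ | p.1 ∈ s ∧ p.2 ∈ Set.Icc (lo p.1) (hi p.1)}.indicator g (x, y)) =
        s.indicator (fun x => (Set.Icc (lo x) (hi x)).indicator (fun y => g (x, y))) x := by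
    ext y
    by_cases hx : x ∈ s <;> simp [Set.indicator, hx]
  rw [← MeasureTheory.integral_indicator hE, integral_prod _ ((integrable_indicator_iff hE).2 hg),
    ← MeasureTheory.integral_indicator hs]
  refine integral_congr_ae (Filter.Eventually.of_forall fun x => ?_)
  by_cases hx : x ∈ s
  · simp only [fiber, Set.indicator_of_mem hx]
    rw [MeasureTheory.integral_indicator measurableSet_Icc, integral_Icc_eq_integral_Ioc,
      ← integral_of_le (hle x hx)]
  · simp [hx]

theorem setIntegral_prod_Icc_fst (hs : MeasurableSet s) (hlo : Measurable lo)
    (hhi : Measurable hi) (hle : ∀ x ∈ s, lo x ≤ hi x) {g : ℝ × α → ℝ}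
    (hg : IntegrableOn g {p | p.2 ∈ s ∧ p.1 ∈ Set.Icc (lo p.2) (hi p.2)} (volume.prod μ)) :
    ∫ p in {p | p.2 ∈ s ∧ p.1 ∈ Set.Icc (lo p.2) (hi p.2)}, g p ∂(volume.prod μ) =
      ∫ x in s, (∫ y in lo x..hi x, g (y, x)) ∂μ := by
  have hswap := Measure.measurePreserving_swap (μ := μ) (ν := (volume : Measure ℝ))
  rw [← hswap.setIntegral_preimage_emb MeasurableEquiv.prodComm.measurableEmbedding]
  exact setIntegral_prod_Icc_snd hs hlo hhi hle
    ((hswap.integrableOn_comp_preimage MeasurableEquiv.prodComm.measurableEmbedding).2 hg)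

end FiberIntegral

theorem isCompact_barFace : IsCompact barFace := by
  refine (isCompact_Icc (a := ((0 : ℝ), (0 : ℝ))) (b := (1, 1))).of_isClosed_subset ?_ ?_
  · simp only [barFace, Set.ofPred_and]
    apply_rules [IsClosed.inter, isClosed_le] <;> fun_prop
  · rintro ⟨x, y⟩ ⟨hx, hy, hxy⟩
    exact ⟨⟨hx, hy⟩, by dsimp at *; linarith, by dsimp at *; linarith⟩

theorem isCompact_barTet : IsCompact barTet := by
  refine (isCompact_Icc (a := ((0 : ℝ), (0 : ℝ), (0 : ℝ))) (b := (1, 1, 1))).of_isClosed_subset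
    ?_ ?_
  · simp only [barTet, Set.ofPred_and]
    apply_rules [IsClosed.inter, isClosed_le] <;> fun_prop
  · rintro ⟨x, y, z⟩ ⟨hx, hxy, hz, hyz⟩
    dsimp at *
    exact ⟨⟨hx, by linarith, hz⟩, by linarith, by linarith, by linarith⟩

theorem barFace_eq_fiber :
    barFace = {p | p.1 ∈ Set.Icc 0 1 ∧ p.2 ∈ Set.Icc 0 (1 - p.1)} := by
  ext ⟨x, y⟩
  simp only [barFace, Set.mem_ofPred_eq, Set.mem_Icc]
  constructor
  · rintro ⟨hx, hy, hxy⟩; exact ⟨⟨hx, by linarith⟩, hy, by linarith⟩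
  · rintro ⟨⟨hx, -⟩, hy, hxy⟩; exact ⟨hx, hy, by linarith⟩

theorem barTet_eq_fiber : barTet = {p | p.2 ∈ barFace ∧ p.1 ∈ Set.Icc 0 p.2.1} := by
  ext ⟨x, y, z⟩
  simp only [barTet, barFace, Set.mem_ofPred_eq, Set.mem_Icc]
  constructor
  · rintro ⟨hx, hxy, hz, hyz⟩; exact ⟨⟨hx.trans hxy, hz, hyz⟩, hx, hxy⟩
  · rintro ⟨⟨-, hz, hyz⟩, hx, hxy⟩; exact ⟨hx, hxy, hz, hyz⟩

theorem setIntegral_barFace {g : ℝ × ℝ → ℝ} (hg : IntegrableOn g barFace) :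
    ∫ p in barFace, g p = ∫ s in (0 : ℝ)..1, ∫ t in (0 : ℝ)..(1 - s), g (s, t) := by
  rw [barFace_eq_fiber, Measure.volume_eq_prod] at *
  rw [setIntegral_prod_Icc_snd measurableSet_Icc measurable_const (by fun_prop)
    (fun s hs => by linarith [hs.2]) hg, integral_of_le zero_le_one,
    integral_Icc_eq_integral_Ioc]

theorem setIntegral_barTet {g : ℝ × ℝ × ℝ → ℝ} (hg : IntegrableOn g barTet) :
    ∫ p in barTet, g p = ∫ p in barFace, ∫ x in (0 : ℝ)..p.1, g (x, p) := by
  rw [barTet_eq_fiber, Measure.volume_eq_prod] at *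
  exact setIntegral_prod_Icc_fst isCompact_barFace.measurableSet measurable_const
    measurable_fst (fun p hp => hp.1) hg

theorem totalDegree_bind₁_le {σ τ R : Type*} [CommSemiring R] {g : σ → MvPolynomial τ R}
    (hg : ∀ i, (g i).totalDegree ≤ 1) (p : MvPolynomial σ R) :
    (bind₁ g p).totalDegree ≤ p.totalDegree := by
  conv_lhs => rw [p.as_sum, map_sum]
  refine (totalDegree_finsetSum _ _).trans (Finset.sup_le fun m hm => ?_)
  rw [bind₁_monomial]
  refine (totalDegree_mul _ _).trans ?_
  rw [totalDegree_C, zero_add]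
  refine (totalDegree_finsetProd _ _).trans ?_
  calc ∑ i ∈ m.support, (g i ^ m i).totalDegree
      ≤ ∑ i ∈ m.support, m i := Finset.sum_le_sum fun i _ =>
        (totalDegree_pow _ _).trans (by simpa using Nat.mul_le_mul_left (m i) (hg i))
    _ ≤ p.totalDegree := le_totalDegree hm

theorem totalDegree_add_lt_or_eq_zero {σ R : Type*} [CommSemiring R] {a b : MvPolynomial σ R}
    {k : ℕ} (ha : a.totalDegree < k ∨ a = 0) (hb : b.totalDegree < k ∨ b = 0) :
    (a + b).totalDegree < k ∨ a + b = 0 := by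
  rcases ha with ha | rfl
  · rcases hb with hb | rfl
    · exact Or.inl ((totalDegree_add a b).trans_lt (max_lt ha hb))
    · simpa using Or.inl ha
  · simpa using hb

theorem continuous_eval_pair (w : MvPolynomial (Fin 2) ℝ) :
    Continuous fun p : ℝ × ℝ => eval ![p.1, p.2] w :=
  (continuous_eval w).comp (by fun_prop)

theorem continuous_ev3 (P : MvPolynomial (Fin 3) ℝ) : Continuous (ev3 P) :=
  (continuous_eval P).comp (by fun_prop)

noncomputable def restrictPlane (β : ℝ) : MvPolynomial (Fin 3) ℝ →ₐ[ℝ] MvPolynomial (Fin 2) ℝ :=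
  bind₁ ![C β * X 0, X 0, X 1]

theorem eval_restrictPlane (β s t : ℝ) (z : MvPolynomial (Fin 3) ℝ) :
    eval ![s, t] (restrictPlane β z) = ev3 z (β * s, s, t) := by
  refine (eval₂Hom_bind₁ _ _ _ z).trans (congrArg (eval · z) ?_)
  ext i
  fin_cases i <;> simp

theorem totalDegree_restrictPlane_le (β : ℝ) (z : MvPolynomial (Fin 3) ℝ) :
    (restrictPlane β z).totalDegree ≤ z.totalDegree := by
  refine totalDegree_bind₁_le (fun i => ?_) z
  fin_cases i <;> simp [(totalDegree_mul _ _).trans, totalDegree_X]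

noncomputable def integralFst (P : MvPolynomial (Fin 3) ℝ) : MvPolynomial (Fin 2) ℝ :=
  ∑ m ∈ P.support, C (P.coeff m / (m 0 + 1)) * X 0 ^ (m 0 + 1 + m 1) * X 1 ^ m 2

theorem eval_integralFst (P : MvPolynomial (Fin 3) ℝ) (y z : ℝ) :
    eval ![y, z] (integralFst P) = ∫ x in (0 : ℝ)..y, eval ![x, y, z] P := by
  have monomials (x : ℝ) : eval ![x, y, z] P =
      ∑ m ∈ P.support, P.coeff m * (y ^ m 1 * z ^ m 2) * x ^ m 0 := by
    rw [eval_eq']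
    refine Finset.sum_congr rfl fun m _ => ?_
    simp only [Fin.prod_univ_three, Matrix.cons_val_zero, Matrix.cons_val_one, Matrix.cons_val_two,
      Matrix.head_cons, Matrix.tail_cons]
    ring
  simp_rw [monomials]
  rw [intervalIntegral.integral_finsetSum fun m _ =>
    (by fun_prop : Continuous _).intervalIntegrable _ _, integralFst, map_sum]
  refine Finset.sum_congr rfl fun m _ => ?_
  rw [intervalIntegral.integral_const_mul, integral_pow]
  simp only [map_mul, map_pow, eval_C, eval_X, Matrix.cons_val_zero, Matrix.cons_val_one]
  field_simp
  ring

theorem totalDegree_integralFst_le (P : MvPolynomial (Fin 3) ℝ) :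
    (integralFst P).totalDegree ≤ P.totalDegree + 1 := by
  refine (totalDegree_finsetSum _ _).trans (Finset.sup_le fun m hm => ?_)
  have hm : m 0 + m 1 + m 2 ≤ P.totalDegree := by
    simpa [Finsupp.sum_fintype, Fin.sum_univ_three] using le_totalDegree hm
  calc (C (P.coeff m / (m 0 + 1)) * X 0 ^ (m 0 + 1 + m 1) * X 1 ^ m 2 :
        MvPolynomial (Fin 2) ℝ).totalDegree
      ≤ (m 0 + 1 + m 1) + m 2 := by
        refine (totalDegree_mul _ _).trans (add_le_add ((totalDegree_mul _ _).trans ?_)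
          ((totalDegree_pow _ _).trans ?_)) <;>
        simp [totalDegree_X]
    _ ≤ P.totalDegree + 1 := by omega

theorem totalDegree_integralFst_le_of_lt_or_eq_zero {P : MvPolynomial (Fin 3) ℝ} {k : ℕ}
    (hP : P.totalDegree < k ∨ P = 0) : (integralFst P).totalDegree ≤ k := by
  rcases hP with hP | rfl
  · exact (totalDegree_integralFst_le P).trans hP
  · simp [integralFst]

theorem faceFluxMoment_eq_zero_of_fst_eq_zero (φ : ℝ × ℝ × ℝ → ℝ)
    (a b c N : ℝ × ℝ × ℝ) (hN : N.1 = 0) (z : ℝ × ℝ × ℝ → ℝ) :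
    faceFluxMoment (fun p => (φ p, 0, 0)) a b c N z = 0 := by
  simp [faceFluxMoment, dot3, hN]

theorem faceFluxMoment_plane {φ : ℝ × ℝ → ℝ} (hφ : IntegrableOn φ barFace) (β : ℝ)
    (N : ℝ × ℝ × ℝ) (z : MvPolynomial (Fin 3) ℝ) :
    faceFluxMoment (fun p => (φ (p.2.1, p.2.2), 0, 0)) (0, 0, 0) (β, 1, 0) (0, 0, 1) N (ev3 z) =
      N.1 * ∫ p in barFace, φ p * eval ![p.1, p.2] (restrictPlane β z) := by
  rw [setIntegral_barFace
    (hφ.mul_continuousOn (continuous_eval_pair _).continuousOn isCompact_barFace),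
    ← intervalIntegral.integral_const_mul, faceFluxMoment]
  congr 1 with s
  rw [← intervalIntegral.integral_const_mul]
  congr 1 with t
  simp only [dot3, eval_restrictPlane, Prod.smul_mk, Prod.mk_add_mk, Prod.mk_sub_mk, smul_eq_mul]
  ring_nf

theorem barTet_subset_Icc_prod_barFace : barTet ⊆ Set.Icc 0 1 ×ˢ barFace := by
  rintro ⟨x, y, z⟩ ⟨hx, hxy, hz, hyz⟩
  exact ⟨⟨hx, by dsimp at *; linarith⟩, hx.trans hxy, hz, hyz⟩

theorem setIntegral_barTet_mul_ev3 {φ : ℝ × ℝ → ℝ} (hφ : IntegrableOn φ barFace)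
    (P : MvPolynomial (Fin 3) ℝ) :
    ∫ p in barTet, φ p.2 * ev3 P p = ∫ p in barFace, φ p * eval ![p.1, p.2] (integralFst P) := by
  have hφT : IntegrableOn (fun p : ℝ × ℝ × ℝ => φ p.2) barTet := by
    have h := hφ.comp_snd (volume.restrict (Set.Icc (0 : ℝ) 1))
    rw [Measure.prod_restrict, ← Measure.volume_eq_prod] at h
    exact IntegrableOn.mono_set h barTet_subset_Icc_prod_barFace
  rw [setIntegral_barTet (hφT.mul_continuousOn (continuous_ev3 P).continuousOn isCompact_barTet)]
  congr 1 with p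
  rw [eval_integralFst, ← intervalIntegral.integral_const_mul]
  rfl

theorem bdm_zero_barTet_general (k : ℕ) (f : ℝ × ℝ → ℝ)
    (hf1 : IntegrableOn f barFace volume)
    (q : MvPolynomial (Fin 2) ℝ)
    (hmom : ∀ z : MvPolynomial (Fin 2) ℝ, z.totalDegree ≤ k →
      (∫ pr in barFace, f pr * MvPolynomial.eval ![pr.1, pr.2] z) =
        ∫ pr in barFace, (MvPolynomial.eval ![pr.1, pr.2] q) *
          MvPolynomial.eval ![pr.1, pr.2] z) :
    ∀ ubar pbar : ℝ × ℝ × ℝ → ℝ × ℝ × ℝ,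
    ubar = (fun p => (f (p.2.1, p.2.2), 0, 0)) →
    pbar = (fun p => (MvPolynomial.eval ![p.2.1, p.2.2] q, 0, 0)) →
    -- face degrees of freedom agree on all four faces of `T̄`
    ((∀ z : MvPolynomial (Fin 3) ℝ, z.totalDegree ≤ k →
        faceFluxMoment pbar (0,0,0) (0,1,0) (0,0,1) (-1,0,0) (ev3 z) =
          faceFluxMoment ubar (0,0,0) (0,1,0) (0,0,1) (-1,0,0) (ev3 z)) ∧
      (∀ z : MvPolynomial (Fin 3) ℝ, z.totalDegree ≤ k →
        faceFluxMoment pbar (0,0,0) (1,1,0) (0,0,1) (1,-1,0) (ev3 z) =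
          faceFluxMoment ubar (0,0,0) (1,1,0) (0,0,1) (1,-1,0) (ev3 z)) ∧
      (∀ z : MvPolynomial (Fin 3) ℝ, z.totalDegree ≤ k →
        faceFluxMoment pbar (0,0,0) (1,1,0) (0,1,0) (0,0,-1) (ev3 z) =
          faceFluxMoment ubar (0,0,0) (1,1,0) (0,1,0) (0,0,-1) (ev3 z)) ∧
      (∀ z : MvPolynomial (Fin 3) ℝ, z.totalDegree ≤ k →
        faceFluxMoment pbar (0,1,0) (1,1,0) (0,0,1) (0,1,1) (ev3 z) =
          faceFluxMoment ubar (0,1,0) (1,1,0) (0,0,1) (0,1,1) (ev3 z))) ∧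
    -- interior degrees of freedom against `N_{k-1} = (P_{k-2})³ ⊕ S_{k-1}` agree
    (∀ A B : Fin 3 → MvPolynomial (Fin 3) ℝ,
      (∀ i, (A i).totalDegree + 2 ≤ k ∨ A i = 0) →
      (∀ i, (B i).totalDegree + 1 ≤ k ∨ B i = 0) →
      B 0 * X 0 + B 1 * X 1 + B 2 * X 2 = 0 →
      (∫ p in barTet, dot3 (pbar p)
          (ev3 (A 0 + B 0) p, ev3 (A 1 + B 1) p, ev3 (A 2 + B 2) p)) =
        ∫ p in barTet, dot3 (ubar p)
          (ev3 (A 0 + B 0) p, ev3 (A 1 + B 1) p, ev3 (A 2 + B 2) p)) := by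
  rintro ubar pbar rfl rfl
  have hq : IntegrableOn (fun p : ℝ × ℝ => eval ![p.1, p.2] q) barFace :=
    (continuous_eval_pair q).continuousOn.integrableOn_compact isCompact_barFace
  have plane (β : ℝ) (N : ℝ × ℝ × ℝ) (z : MvPolynomial (Fin 3) ℝ) (hz : z.totalDegree ≤ k) :
      faceFluxMoment (fun p => (eval ![p.2.1, p.2.2] q, 0, 0))
          (0, 0, 0) (β, 1, 0) (0, 0, 1) N (ev3 z) =
        faceFluxMoment (fun p => (f (p.2.1, p.2.2), 0, 0))
          (0, 0, 0) (β, 1, 0) (0, 0, 1) N (ev3 z) := by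
    rw [faceFluxMoment_plane hq, faceFluxMoment_plane hf1,
      hmom _ ((totalDegree_restrictPlane_le β z).trans hz)]
  have tangent (a b c N : ℝ × ℝ × ℝ) (hN : N.1 = 0) (z : MvPolynomial (Fin 3) ℝ) :
      faceFluxMoment (fun p => (eval ![p.2.1, p.2.2] q, 0, 0)) a b c N (ev3 z) =
        faceFluxMoment (fun p => (f (p.2.1, p.2.2), 0, 0)) a b c N (ev3 z) := by
    rw [faceFluxMoment_eq_zero_of_fst_eq_zero _ _ _ _ _ hN,
      faceFluxMoment_eq_zero_of_fst_eq_zero _ _ _ _ _ hN]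
  refine ⟨⟨plane 0 _, plane 1 _, fun z _ => tangent _ _ _ _ rfl z,
    fun z _ => tangent _ _ _ _ rfl z⟩, fun A B hA hB _ => ?_⟩
  have hP : (A 0 + B 0).totalDegree < k ∨ A 0 + B 0 = 0 :=
    totalDegree_add_lt_or_eq_zero ((hA 0).imp_left (by omega)) (hB 0)
  simp only [dot3, zero_mul, add_zero]
  rw [setIntegral_barTet_mul_ev3 hq, setIntegral_barTet_mul_ev3 hf1,
    hmom _ (totalDegree_integralFst_le_of_lt_or_eq_zero hP)]

/-- Lemma 4-analogue on `T̄`: let `f ∈ L²(e₁)`, `ū(x) = (f(x₂,x₃),0,0)` and let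
`q ∈ P_k(e₁)` satisfy `∫_{e₁} f z = ∫_{e₁} q z` for all `z ∈ P_k(e₁)`.  Then
`(q(x₂,x₃),0,0)` satisfies all BDM_k interpolation conditions for `ū` on `T̄`; in
particular the moments of the normal trace on the face with normal `(1,-1,0)/√2` (the face
in the plane `x₁ = x₂`, which projects bijectively onto `e₁` via `(x₂,x₂,x₃) ↦ (x₂,x₃)`)
also coincide. -/
theorem bdm_zero_barTet (k : ℕ) (hk : 1 ≤ k) (f : ℝ × ℝ → ℝ)
    (hf1 : IntegrableOn f barFace volume)
    (hf2 : IntegrableOn (fun pr => (f pr) ^ 2) barFace volume)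
    (q : MvPolynomial (Fin 2) ℝ) (hq : q.totalDegree ≤ k)
    (hmom : ∀ z : MvPolynomial (Fin 2) ℝ, z.totalDegree ≤ k →
      (∫ pr in barFace, f pr * MvPolynomial.eval ![pr.1, pr.2] z) =
        ∫ pr in barFace, (MvPolynomial.eval ![pr.1, pr.2] q) *
          MvPolynomial.eval ![pr.1, pr.2] z) :
    ∀ ubar pbar : ℝ × ℝ × ℝ → ℝ × ℝ × ℝ,
    ubar = (fun p => (f (p.2.1, p.2.2), 0, 0)) →
    pbar = (fun p => (MvPolynomial.eval ![p.2.1, p.2.2] q, 0, 0)) →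
    -- face degrees of freedom agree on all four faces of `T̄`
    ((∀ z : MvPolynomial (Fin 3) ℝ, z.totalDegree ≤ k →
        faceFluxMoment pbar (0,0,0) (0,1,0) (0,0,1) (-1,0,0) (ev3 z) =
          faceFluxMoment ubar (0,0,0) (0,1,0) (0,0,1) (-1,0,0) (ev3 z)) ∧
      (∀ z : MvPolynomial (Fin 3) ℝ, z.totalDegree ≤ k →
        faceFluxMoment pbar (0,0,0) (1,1,0) (0,0,1) (1,-1,0) (ev3 z) =
          faceFluxMoment ubar (0,0,0) (1,1,0) (0,0,1) (1,-1,0) (ev3 z)) ∧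
      (∀ z : MvPolynomial (Fin 3) ℝ, z.totalDegree ≤ k →
        faceFluxMoment pbar (0,0,0) (1,1,0) (0,1,0) (0,0,-1) (ev3 z) =
          faceFluxMoment ubar (0,0,0) (1,1,0) (0,1,0) (0,0,-1) (ev3 z)) ∧
      (∀ z : MvPolynomial (Fin 3) ℝ, z.totalDegree ≤ k →
        faceFluxMoment pbar (0,1,0) (1,1,0) (0,0,1) (0,1,1) (ev3 z) =
          faceFluxMoment ubar (0,1,0) (1,1,0) (0,0,1) (0,1,1) (ev3 z))) ∧
    -- interior degrees of freedom against `N_{k-1} = (P_{k-2})³ ⊕ S_{k-1}` agree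
    (∀ A B : Fin 3 → MvPolynomial (Fin 3) ℝ,
      (∀ i, (A i).totalDegree + 2 ≤ k ∨ A i = 0) →
      (∀ i, (B i).totalDegree + 1 ≤ k ∨ B i = 0) →
      B 0 * X 0 + B 1 * X 1 + B 2 * X 2 = 0 →
      (∫ p in barTet, dot3 (pbar p)
          (ev3 (A 0 + B 0) p, ev3 (A 1 + B 1) p, ev3 (A 2 + B 2) p)) =
        ∫ p in barTet, dot3 (ubar p)
          (ev3 (A 0 + B 0) p, ev3 (A 1 + B 1) p, ev3 (A 2 + B 2) p)) :=
  bdm_zero_barTet_general k f hf1 q hmom
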